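/- Let N ≥ 5 be an integer and let p₁,…,p_r be the distinct prime factors of N. Then there exists an irreducible λ-quiddity over ℤ/Nℤ of size at least N, and every irreducible λ-quiddity over ℤ/Nℤ has size at most (N²/2)·∏_{i=1}^{r}(1 − 1/p_i²) + 2. -/

import Mathlib

/-- The matrix `[[a, -1], [1, 0]]`. -/
def mMat {A : Type*} [CommRing A] (a : A) : Matrix (Fin 2) (Fin 2) A := !![a, -1; 1, 0]

/-- `M_n(a₁, …, aₙ) = mMat aₙ * ⋯ * mMat a₁`, for the tuple given as a list `[a₁, …, aₙ]`. -/
def mProd {A : Type*} [CommRing A] (l : List A) : Matrix (Fin 2) (Fin 2) A :=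
  ((l.map mMat).reverse).prod

/-- The sum `(a₁,…,aₙ) ⊕ (b₁,…,b_m) = (a₁+b_m, a₂,…,a_{n−1}, aₙ+b₁, b₂,…,b_{m−1})`. -/
def oplus {A : Type*} [CommRing A] (a b : List A) : List A :=
  (a.headD 0 + b.getLastD 0) ::
    (a.dropLast.tail ++ (a.getLastD 0 + b.headD 0) :: b.dropLast.tail)

/-- Two tuples are equivalent if one is a cyclic rotation of the other or of its reversal. -/
def TupEquiv {A : Type*} (a b : List A) : Prop :=
  (∃ k, b = a.rotate k) ∨ (∃ k, b = a.reverse.rotate k)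

/-- A λ-quiddity over `R ⊆ A`: all entries lie in `R` and `M_n(a₁,…,aₙ) = ± Id`. -/
def IsQuiddity {A : Type*} [CommRing A] (R : Set A) (c : List A) : Prop :=
  (∀ x ∈ c, x ∈ R) ∧ (mProd c = 1 ∨ mProd c = -1)

/-- A λ-quiddity `c` over `R` is reducible if `c ∼ a ⊕ b` with `a ∈ R^m`, `m ≥ 3`,
and `b` a λ-quiddity over `R` of size `l ≥ 3`. -/
def IsReducible {A : Type*} [CommRing A] (R : Set A) (c : List A) : Prop :=
  ∃ a b : List A, 3 ≤ a.length ∧ 3 ≤ b.length ∧ (∀ x ∈ a, x ∈ R) ∧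
    IsQuiddity R b ∧ TupEquiv c (oplus a b)

/-- An irreducible λ-quiddity over `R`: a λ-quiddity of size `≥ 3` which is not reducible. -/
def IrreducibleQuiddity {A : Type*} [CommRing A] (R : Set A) (c : List A) : Prop :=
  IsQuiddity R c ∧ 3 ≤ c.length ∧ ¬ IsReducible R c

/-- The continuant `K_i(a₁,…,a_i)`, determinant of the tridiagonal matrix with diagonal
`a₁,…,a_i` and off-diagonal entries `1`; `K₀ = 1`. -/
def cont {A : Type*} [CommRing A] : List A → A
  | [] => 1
  | [a] => a
  | a :: b :: l => a * cont (b :: l) - cont l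

/-!
The partial products `M_i(c₁, …, c_i)` of a λ-quiddity `c` of size `n` have determinant `1`, so
their bottom rows are unimodular vectors of `(ℤ/Nℤ)²`. If two of the `2n` vectors `±(bottom row of
M_i)`, `0 ≤ i < n`, coincided, the product over the segment of `c` between the two indices, or over
the complementary cyclic segment, would be upper triangular with diagonal `±1`; for `n ≥ 5` one of
the two segments has length between `1` and `n - 3`, and such a segment `w` is the interior of a
λ-quiddity `(x, w, 0)` that splits off `c`. So `2n` is at most the number of unimodular vectors,
and counting the fibres of the reduction modulo the primes dividing `N` bounds that number by
`N² ∏ (1 - 1/p²)`.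

The lower bound is attained by `(2, …, 2)` of size `N`: a summand `(x, 2, …, 2, y)` with `k`
interior entries has `M₂₊ₖ = ±Id` only if `k ≡ 0` or `k ≡ -2 (mod N)`.
-/

section Lists

variable {α : Type*}

lemma exists_eq_cons_append_singleton {l : List α} (hl : 2 ≤ l.length) :
    ∃ a m b, l = a :: (m ++ [b]) := by
  obtain _ | ⟨a, t⟩ := l
  · simp at hl
  · obtain ⟨m, b, rfl⟩ := (List.eq_nil_or_concat t).resolve_left (by rintro rfl; simp at hl)
    exact ⟨a, m, b, by simp⟩

lemma tupEquiv_iff_isRotated {c d : List α} : TupEquiv c d ↔ c ~r d ∨ c.reverse ~r d := by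
  simp only [TupEquiv, List.IsRotated, eq_comm]

lemma TupEquiv.eq_replicate {n : ℕ} {a : α} {d : List α}
    (h : TupEquiv (List.replicate n a) d) : d = List.replicate n a := by
  rcases h with ⟨k, rfl⟩ | ⟨k, rfl⟩ <;> simp [List.rotate_replicate]

end Lists

section Quiddity

variable {A : Type*} [CommRing A]

@[simp] lemma mProd_nil : mProd ([] : List A) = 1 := rfl

lemma mProd_append (u v : List A) : mProd (u ++ v) = mProd v * mProd u := by
  simp [mProd, List.prod_append]

lemma mProd_cons (a : A) (l : List A) : mProd (a :: l) = mProd l * mMat a :=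
  mProd_append [a] l |>.trans (by simp [mProd])

lemma mProd_concat (l : List A) (a : A) : mProd (l ++ [a]) = mMat a * mProd l :=
  (mProd_append l [a]).trans (by simp [mProd])

lemma det_mProd (l : List A) : (mProd l).det = 1 := by
  induction l with
  | nil => simp
  | cons a l ih => simp [mProd_cons, Matrix.det_mul, ih, mMat, Matrix.det_fin_two_of]

lemma isCoprime_of_det_eq_one {M : Matrix (Fin 2) (Fin 2) A} (hM : M.det = 1) :
    IsCoprime (M 1 0) (M 1 1) :=
  ⟨-M 0 1, M 0 0, by rw [Matrix.det_fin_two] at hM; linear_combination hM⟩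

lemma mProd_replicate_two (n : ℕ) :
    mProd (List.replicate n (2 : A)) = !![(n : A) + 1, -n; n, 1 - n] := by
  induction n with
  | zero => simp [Matrix.one_fin_two]
  | succ n ih =>
    rw [List.replicate_succ, mProd_cons, ih]
    ext i j
    fin_cases i <;> fin_cases j <;> simp [mMat] <;> ring

lemma mProd_cons_replicate_two_concat_one_one (a b : A) (n : ℕ) :
    mProd (a :: (List.replicate n 2 ++ [b])) 1 1 = -((n : A) + 1) := by
  simp [mProd_cons, mProd_concat, mProd_replicate_two, mMat, Matrix.mul_apply, Fin.sum_univ_two]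

lemma oplus_cons_append_singleton (a b c d : A) (u v : List A) :
    oplus (a :: (u ++ [b])) (c :: (v ++ [d])) = (a + d) :: (u ++ (b + c) :: v) := by
  rw [oplus, show a :: (u ++ [b]) = (a :: u) ++ [b] from rfl,
    show c :: (v ++ [d]) = (c :: v) ++ [d] from rfl, List.dropLast_concat, List.dropLast_concat,
    List.getLastD_concat, List.getLastD_concat]
  simp

lemma IsReducible.of_isRotated {c d : List A} (h : IsReducible Set.univ d) (hcd : c ~r d) :
    IsReducible Set.univ c := by
  obtain ⟨a, b, ha, hb, haR, hbq, hd⟩ := h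
  refine ⟨a, b, ha, hb, haR, hbq, ?_⟩
  rw [tupEquiv_iff_isRotated] at hd ⊢
  exact hd.imp hcd.trans hcd.reverse.trans

lemma mMat_zero_mul_mul_mMat {P : Matrix (Fin 2) (Fin 2) A} (hdet : P.det = 1)
    (h₁₀ : P 1 0 = 0) (h₁₁ : P 1 1 * P 1 1 = 1) :
    mMat 0 * P * mMat (-(P 1 1 * P 0 1)) = -P 1 1 • 1 := by
  rw [Matrix.det_fin_two, h₁₀] at hdet
  have h₀₀ : P 0 0 = P 1 1 := by linear_combination P 1 1 * hdet - P 0 0 * h₁₁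
  rw [Matrix.eta_fin_two P]
  ext i j
  fin_cases i <;> fin_cases j <;> simp [mMat, h₀₀, h₁₀]
  linear_combination (-P 0 1) * h₁₁

lemma isReducible_append {u w : List A} (hu : 3 ≤ u.length) (hw : w ≠ [])
    (h₁₀ : mProd w 1 0 = 0) (h₁₁ : mProd w 1 1 = 1 ∨ mProd w 1 1 = -1) :
    IsReducible Set.univ (u ++ w) := by
  obtain ⟨a, m, b, rfl⟩ := exists_eq_cons_append_singleton (by omega : 2 ≤ u.length)
  set x := -(mProd w 1 1 * mProd w 0 1)
  -- `u ++ w = (a, m, b - x) ⊕ (x, w, 0)`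
  have hb : mProd (x :: (w ++ [0])) = -mProd w 1 1 • 1 := by
    rw [mProd_cons, mProd_concat, mMat_zero_mul_mul_mMat (det_mProd w) h₁₀
      (by rcases h₁₁ with h | h <;> rw [h] <;> ring)]
  refine ⟨a :: (m ++ [b - x]), x :: (w ++ [0]), by simpa using hu,
    by simp; exact List.length_pos_iff.2 hw, fun _ _ ↦ trivial, ⟨fun _ _ ↦ trivial, ?_⟩,
    Or.inl ⟨0, by simp [oplus_cons_append_singleton]⟩⟩
  rcases h₁₁ with h | h <;> simp [hb, h]

lemma row_one_eq_of_mul_row_one_eq_smul {Q M : Matrix (Fin 2) (Fin 2) A} {e : A}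
    (hM : M.det = 1) (h : (Q * M) 1 = e • M 1) : Q 1 0 = 0 ∧ Q 1 1 = e := by
  rw [Matrix.det_fin_two] at hM
  have h₀ := congrFun h 0
  have h₁ := congrFun h 1
  simp only [Matrix.mul_apply, Fin.sum_univ_two, Pi.smul_apply, smul_eq_mul] at h₀ h₁
  constructor
  · linear_combination -Q 1 0 * hM + M 1 1 * h₀ - M 1 0 * h₁
  · linear_combination -(Q 1 1 - e) * hM + M 0 0 * h₁ - M 0 1 * h₀

lemma isReducible_of_row_take_eq_smul {c : List A} (hc : mProd c = 1 ∨ mProd c = -1)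
    (hn : 5 ≤ c.length) {i j : ℕ} (hij : i < j) (hj : j < c.length) {e : A}
    (he : e = 1 ∨ e = -1) (h : mProd (c.take j) 1 = e • mProd (c.take i) 1) :
    IsReducible Set.univ c := by
  set s := (c.take j).drop i
  set t := c.drop j ++ c.take i
  have hs : s.length = j - i := by simp [s]; omega
  have ht : t.length = c.length - (j - i) := by simp [t]; omega
  have hts : c.take j = c.take i ++ s := by
    rw [← List.take_append_drop i (c.take j), List.take_take, min_eq_left hij.le]
  by_cases hlen : j - i ≤ c.length - 3
  · have hrot : c ~r t ++ s := ⟨j, by rw [List.rotate_eq_drop_append_take hj.le, hts]; simp [t]⟩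
    have hQ : (mProd s * mProd (c.take i)) 1 = e • mProd (c.take i) 1 := by
      rw [← mProd_append, ← hts, h]
    obtain ⟨h₁₀, h₁₁⟩ := row_one_eq_of_mul_row_one_eq_smul (det_mProd _) hQ
    exact (isReducible_append (u := t) (by omega) (by simp [← List.length_pos_iff]; omega)
      h₁₀ (h₁₁ ▸ he)).of_isRotated hrot
  · have hrot : c ~r s ++ t := by
      have hc : c = c.take i ++ (s ++ c.drop j) := by
        rw [← List.append_assoc, ← hts, List.take_append_drop]
      have hrot := List.rotate_append_length_eq (c.take i) (s ++ c.drop j)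
      rw [← hc, List.append_assoc] at hrot
      exact ⟨_, hrot⟩
    obtain ⟨σ, hσ, hcσ⟩ : ∃ σ : A, (σ = 1 ∨ σ = -1) ∧ mProd c = σ • 1 := by
      rcases hc with hc | hc
      · exact ⟨1, Or.inl rfl, by simp [hc]⟩
      · exact ⟨-1, Or.inr rfl, by simp [hc]⟩
    have hee : e * e = 1 := by rcases he with rfl | rfl <;> ring
    have hQ : (mProd t * mProd (c.take j)) 1 = (σ * e) • mProd (c.take j) 1 := by
      rw [mProd_append, mul_assoc, ← mProd_append, List.take_append_drop, hcσ, h, smul_smul,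
        mul_assoc, hee, mul_one, Matrix.mul_smul, mul_one]
      rfl
    obtain ⟨h₁₀, h₁₁⟩ := row_one_eq_of_mul_row_one_eq_smul (det_mProd _) hQ
    refine (isReducible_append (u := s) (by omega) (by simp [← List.length_pos_iff]; omega)
      h₁₀ ?_).of_isRotated hrot
    rcases hσ with rfl | rfl <;> rcases he with rfl | rfl <;> simp [h₁₁]

lemma row_take_ne_smul_of_irreducible {c : List A} (hc : IrreducibleQuiddity Set.univ c)
    (hn : 5 ≤ c.length) {i j : ℕ} (hi : i < c.length) (hj : j < c.length) (hij : i ≠ j) {e : A}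
    (he : e = 1 ∨ e = -1) : mProd (c.take j) 1 ≠ e • mProd (c.take i) 1 := by
  obtain ⟨⟨-, hc⟩, -, hirr⟩ := hc
  intro h
  rcases hij.lt_or_gt with hij | hji
  · exact hirr (isReducible_of_row_take_eq_smul hc hn hij hj he h)
  · refine hirr (isReducible_of_row_take_eq_smul hc hn hji hi he ?_)
    rw [h, smul_smul]
    rcases he with rfl | rfl <;> simp

lemma row_one_ne_neg_of_det_eq_one (h2 : (2 : A) ≠ 0) {M : Matrix (Fin 2) (Fin 2) A}
    (hM : M.det = 1) : M 1 ≠ -M 1 := by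
  intro h
  obtain ⟨a, b, hab⟩ := isCoprime_of_det_eq_one hM
  have h₀ := congrFun h 0
  have h₁ := congrFun h 1
  simp only [Pi.neg_apply] at h₀ h₁
  exact h2 (by linear_combination -2 * hab + a * h₀ + b * h₁)

lemma injOn_smul_row_take_of_irreducible (h2 : (2 : A) ≠ 0) {c : List A}
    (hc : IrreducibleQuiddity Set.univ c) (hn : 5 ≤ c.length) :
    Set.InjOn (fun p : ℕ × A ↦ p.2 • mProd (c.take p.1) 1)
      (Set.Iio c.length ×ˢ {1, -1}) := by
  rintro ⟨i, s⟩ ⟨hi, hs⟩ ⟨j, t⟩ ⟨hj, ht⟩ h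
  simp only [Set.mem_Iio, Set.mem_insert_iff, Set.mem_singleton_iff] at h hi hj hs ht
  by_cases hij : i = j
  · subst hij
    have hne := row_one_ne_neg_of_det_eq_one h2 (det_mProd (c.take i))
    rcases hs with rfl | rfl <;> rcases ht with rfl | rfl
    · rfl
    · exact absurd (by simpa using h) hne
    · exact absurd (by simpa using h.symm) hne
    · rfl
  · refine absurd ?_ (row_take_ne_smul_of_irreducible hc hn hi hj hij (e := s * t) ?_)
    · rcases hs with rfl | rfl <;> rcases ht with rfl | rfl <;> simp at h ⊢ <;> simp [h]
    · rcases hs with rfl | rfl <;> rcases ht with rfl | rfl <;> simp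

lemma exists_card_eq_two_mul_length_of_irreducible (h2 : (2 : A) ≠ 0) {c : List A}
    (hc : IrreducibleQuiddity Set.univ c) (hn : 5 ≤ c.length) :
    ∃ S : Finset (Fin 2 → A), (∀ v ∈ S, IsCoprime (v 0) (v 1)) ∧ S.card = 2 * c.length := by
  classical
  refine ⟨(Finset.range c.length ×ˢ ({1, -1} : Finset A)).image
    fun p ↦ p.2 • mProd (c.take p.1) 1, ?_, ?_⟩
  · simp only [Finset.mem_image, Finset.mem_product, Finset.mem_insert, Finset.mem_singleton]
    rintro _ ⟨⟨i, s⟩, ⟨-, rfl | rfl⟩, rfl⟩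
    · simpa using isCoprime_of_det_eq_one (det_mProd (c.take i))
    · simpa using (isCoprime_of_det_eq_one (det_mProd (c.take i))).neg_neg
  rw [Finset.card_image_of_injOn (by simpa using injOn_smul_row_take_of_irreducible h2 hc hn),
    Finset.card_product, Finset.card_range, Finset.card_pair fun h ↦ h2 (by linear_combination h),
    mul_comm]

lemma natCast_add_two_eq_zero_or_natCast_eq_zero {a b : A} {k : ℕ}
    (h : IsQuiddity Set.univ (a :: (List.replicate k 2 ++ [b]))) :
    ((k + 2 : ℕ) : A) = 0 ∨ (k : A) = 0 := by
  have h₁₁ := mProd_cons_replicate_two_concat_one_one a b k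
  rcases h.2 with h | h <;> rw [h] at h₁₁ <;> simp at h₁₁
  · left; push_cast; linear_combination h₁₁
  · exact .inr h₁₁

lemma ZMod.natCast_ne_zero_of_pos_of_lt {N m : ℕ} (hm : 0 < m) (hmN : m < N) :
    (m : ZMod N) ≠ 0 := fun h ↦
  hm.ne' (Nat.eq_zero_of_dvd_of_lt ((ZMod.natCast_eq_zero_iff m N).1 h) hmN)

lemma irreducibleQuiddity_replicate_two {N : ℕ} (hN : 3 ≤ N) :
    IrreducibleQuiddity Set.univ (List.replicate N (2 : ZMod N)) := by
  refine ⟨⟨fun _ _ ↦ trivial, Or.inl ?_⟩, by simpa using hN, ?_⟩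
  · simp [mProd_replicate_two, Matrix.one_fin_two]
  rintro ⟨a, b, ha, hb, -, hbq, hequiv⟩
  obtain ⟨x, u, y, rfl⟩ := exists_eq_cons_append_singleton (by omega : 2 ≤ a.length)
  obtain ⟨z, w, t, rfl⟩ := exists_eq_cons_append_singleton (by omega : 2 ≤ b.length)
  have h := hequiv.eq_replicate
  rw [oplus_cons_append_singleton] at h
  have hw : w = List.replicate w.length 2 :=
    List.eq_replicate_iff.2 ⟨rfl, fun v hv ↦ List.eq_of_mem_replicate (by rw [← h]; simp [hv])⟩
  have hlen := congrArg List.length h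
  simp only [List.length_cons, List.length_append, List.length_replicate,
    List.length_nil] at hlen ha hb
  rw [hw] at hbq
  rcases natCast_add_two_eq_zero_or_natCast_eq_zero hbq with h0 | h0
  · exact ZMod.natCast_ne_zero_of_pos_of_lt (by omega) (by omega) h0
  · exact ZMod.natCast_ne_zero_of_pos_of_lt (by omega) (by omega) h0

end Quiddity

section UnimodularCount

open Finset

lemma card_filter_map_eq_le_card_ker {G H : Type*} [AddGroup G] [AddGroup H] [Fintype G]
    [DecidableEq G] [DecidableEq H] (f : G →+ H) (s : Finset G) (y : H) :
    #{x ∈ s | f x = y} ≤ #{x | f x = 0} := by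
  obtain h | ⟨x₀, hx₀⟩ := Finset.eq_empty_or_nonempty {x ∈ s | f x = y}
  · simp [h]
  · refine card_le_card_of_injOn (· - x₀) (fun x hx ↦ ?_) (sub_left_injective.injOn)
    simp only [coe_filter, mem_filter] at hx hx₀
    simp [hx.2, hx₀.2]

def reduceModPrimeFactors (N : ℕ) :
    (Fin 2 → ZMod N) →+* ((p : N.primeFactors) → Fin 2 → ZMod p) :=
  RingHom.pi fun p ↦ (ZMod.castHom (Nat.dvd_of_mem_primeFactors p.2) (ZMod p)).compLeft (Fin 2)

lemma reduceModPrimeFactors_apply (N : ℕ) (v : Fin 2 → ZMod N) (p : N.primeFactors) (k : Fin 2) :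
    reduceModPrimeFactors N v p k = ZMod.castHom (Nat.dvd_of_mem_primeFactors p.2) (ZMod p) (v k) :=
  rfl

variable {N : ℕ} [NeZero N]

lemma card_ker_reduceModPrimeFactors_le :
    #{v | reduceModPrimeFactors N v = 0} ≤ (N / ∏ p ∈ N.primeFactors, p) ^ 2 := by
  classical
  set R := ∏ p ∈ N.primeFactors, p
  set K := (range (N / R)).image fun m ↦ ((m * R : ℕ) : ZMod N)
  have hK : ∀ x : ZMod N, (∀ p : N.primeFactors,
      ZMod.castHom (Nat.dvd_of_mem_primeFactors p.2) (ZMod p) x = 0) → x ∈ K := by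
    intro x hx
    have hR : R ∣ x.val := Finset.prod_primes_dvd _
      (fun p hp ↦ (Nat.prime_of_mem_primeFactors hp).prime) fun p hp ↦ by
        have hxp := hx ⟨p, hp⟩
        rwa [ZMod.castHom_apply, ZMod.cast_eq_val, ZMod.natCast_eq_zero_iff] at hxp
    refine mem_image.2 ⟨x.val / R, mem_range.2 ?_, by rw [Nat.div_mul_cancel hR]; simp⟩
    exact Nat.div_lt_div_of_lt_of_dvd (Nat.prod_primeFactors_dvd N) (ZMod.val_lt x)
  calc #{v | reduceModPrimeFactors N v = 0}
      ≤ #(Fintype.piFinset fun _ : Fin 2 ↦ K) := by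
        refine card_le_card fun v hv ↦ Fintype.mem_piFinset.2 fun k ↦ hK _ fun p ↦ ?_
        simpa [reduceModPrimeFactors_apply] using congrFun (congrFun (mem_filter.1 hv).2 p) k
    _ ≤ (N / R) ^ 2 := by
      rw [Fintype.card_piFinset_const]
      exact Nat.pow_le_pow_left (card_image_le.trans (card_range _).le) 2

lemma card_le_of_forall_isCoprime (S : Finset (Fin 2 → ZMod N))
    (hS : ∀ v ∈ S, IsCoprime (v 0) (v 1)) :
    #S ≤ (N / ∏ p ∈ N.primeFactors, p) ^ 2 * ∏ p ∈ N.primeFactors, (p ^ 2 - 1) := by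
  classical
  have (p : N.primeFactors) : NeZero (p : ℕ) := ⟨(Nat.prime_of_mem_primeFactors p.2).ne_zero⟩
  set T := Fintype.piFinset fun p : N.primeFactors ↦ (univ : Finset (Fin 2 → ZMod p)).erase 0
  have hmaps : ∀ v ∈ S, reduceModPrimeFactors N v ∈ T := by
    intro v hv
    refine Fintype.mem_piFinset.2 fun p ↦ mem_erase.2 ⟨fun h0 ↦ ?_, mem_univ _⟩
    have : Fact p.1.Prime := ⟨Nat.prime_of_mem_primeFactors p.2⟩
    have hcop := (hS v hv).map (ZMod.castHom (Nat.dvd_of_mem_primeFactors p.2) (ZMod p))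
    rw [← reduceModPrimeFactors_apply, ← reduceModPrimeFactors_apply, h0] at hcop
    exact not_isCoprime_zero_zero hcop
  have hT : #T = ∏ p ∈ N.primeFactors, (p ^ 2 - 1) := by
    simp [T, card_erase_of_mem, ZMod.card, prod_attach N.primeFactors fun p ↦ p ^ 2 - 1]
  calc #S ≤ #{v | reduceModPrimeFactors N v = 0} * #T :=
        card_le_mul_card_image_of_maps_to hmaps _ fun t _ ↦
          card_filter_map_eq_le_card_ker (reduceModPrimeFactors N).toAddMonoidHom S t
    _ ≤ _ := hT ▸ Nat.mul_le_mul_right _ card_ker_reduceModPrimeFactors_le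

lemma cast_card_le_of_forall_isCoprime (S : Finset (Fin 2 → ZMod N))
    (hS : ∀ v ∈ S, IsCoprime (v 0) (v 1)) :
    (#S : ℚ) ≤ N ^ 2 * ∏ p ∈ N.primeFactors, (1 - 1 / (p : ℚ) ^ 2) := by
  have hR : (∏ p ∈ N.primeFactors, (p : ℚ)) ≠ 0 :=
    prod_ne_zero_iff.2 fun p hp ↦ by exact_mod_cast (Nat.prime_of_mem_primeFactors hp).ne_zero
  have hfactor :
      ∀ p ∈ N.primeFactors, ((p ^ 2 - 1 : ℕ) : ℚ) = p ^ 2 * (1 - 1 / (p : ℚ) ^ 2) :=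
    fun p hp ↦ by
      have hp := (Nat.prime_of_mem_primeFactors hp).one_lt
      rw [Nat.cast_sub (Nat.one_le_pow _ _ (by omega))]
      field_simp
      push_cast
      ring
  calc (#S : ℚ)
      ≤ (((N / ∏ p ∈ N.primeFactors, p) ^ 2 * ∏ p ∈ N.primeFactors, (p ^ 2 - 1) : ℕ) : ℚ) := by
        exact_mod_cast card_le_of_forall_isCoprime S hS
    _ = N ^ 2 * ∏ p ∈ N.primeFactors, (1 - 1 / (p : ℚ) ^ 2) := by
      rw [Nat.cast_mul, Nat.cast_prod, prod_congr rfl hfactor, prod_mul_distrib, prod_pow,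
        Nat.cast_pow, Nat.cast_div (Nat.prod_primeFactors_dvd N) (by rwa [Nat.cast_prod]),
        Nat.cast_prod]
      field_simp

end UnimodularCount

/-- For `N ≥ 5`, there is an irreducible λ-quiddity over `ℤ/Nℤ` of size at least `N`, and
every irreducible λ-quiddity over `ℤ/Nℤ` has size at most
`(N²/2) · ∏_{p | N prime} (1 − 1/p²) + 2`. -/
theorem stmt3 (N : ℕ) (hN : 5 ≤ N) :
    (∃ c : List (ZMod N), IrreducibleQuiddity Set.univ c ∧ N ≤ c.length) ∧
    (∀ c : List (ZMod N), IrreducibleQuiddity Set.univ c →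
      (c.length : ℚ) ≤
        (N : ℚ) ^ 2 / 2 * ∏ p ∈ N.primeFactors, (1 - 1 / (p : ℚ) ^ 2) + 2) := by
  have : NeZero N := ⟨by omega⟩
  refine ⟨⟨_, irreducibleQuiddity_replicate_two (by omega), by simp⟩, fun c hc ↦ ?_⟩
  have hN' : (5 : ℚ) ≤ N := by exact_mod_cast hN
  -- counting the unimodular vectors `(x, 1)`
  have hNP := cast_card_le_of_forall_isCoprime (Finset.univ.image fun x : ZMod N ↦ ![x, 1])
    (by simp [isCoprime_one_right])
  rw [Finset.card_image_of_injective _ fun x y h ↦ by simpa using congrFun h 0, Finset.card_univ,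
    ZMod.card] at hNP
  by_cases hn : 5 ≤ c.length
  · have h2 : (2 : ZMod N) ≠ 0 := by
      exact_mod_cast ZMod.natCast_ne_zero_of_pos_of_lt (m := 2) two_pos (by omega)
    obtain ⟨S, hS, hcard⟩ := exists_card_eq_two_mul_length_of_irreducible h2 hc hn
    have hSP := cast_card_le_of_forall_isCoprime S hS
    rw [hcard, Nat.cast_mul, Nat.cast_two] at hSP
    linarith
  · have : (c.length : ℚ) ≤ 4 := by exact_mod_cast (by omega)
    linarith
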